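/- arXiv:1706.04410 — 3 statements merged into one kernel-verified Lean document; each statement's English description precedes it below -/
import Mathlib

section
/- Let p, q ∈ (0,1) and λ ∈ (0,1], and set δ = |p - q|. Then the Rényi divergence of order 1+λ between Bernoulli(p) and Bernoulli(q), D_{1+λ} = (1/λ)·log( p^{1+λ}/q^λ + (1-p)^{1+λ}/(1-q)^λ ), satisfies D_{1+λ} ≤ log(1 + 2δ²/min(q, 1-q)). -/
/-!
Write `t₀ = p / q`, `t₁ = (1 - p) / (1 - q)` for the likelihood ratio. The Rényi sum equals
`p t₀ ^ λ + (1 - p) t₁ ^ λ`, and since `x ↦ x ^ λ` is concave this is at most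
`(p t₀ + (1 - p) t₁) ^ λ = (1 + χ²) ^ λ`, where `χ² = (p - q)² / (q (1 - q))`. Hence
`D_{1+λ} ≤ log (1 + χ²)`, and `q (1 - q) = min q (1 - q) * max q (1 - q) ≥ min q (1 - q) / 2`.
-/

open Real

lemma rpow_one_add_div_rpow {a b l : ℝ} (ha : 0 ≤ a) (hb : 0 ≤ b) (hl : 0 ≤ l) :
    a ^ (1 + l) / b ^ l = a * (a / b) ^ l := by
  rw [rpow_one_add' ha (by positivity), div_rpow ha hb, mul_div_assoc]

lemma bernoulli_chiSq_add_one {p q : ℝ} (hq0 : 0 < q) (hq1 : q < 1) :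
    p ^ 2 / q + (1 - p) ^ 2 / (1 - q) = 1 + (p - q) ^ 2 / (q * (1 - q)) := by
  have : (1 - q) ≠ 0 := by linarith
  field_simp
  ring

lemma bernoulli_renyi_sum_le {p q l : ℝ} (hp0 : 0 ≤ p) (hp1 : p ≤ 1) (hq0 : 0 < q)
    (hq1 : q < 1) (hl0 : 0 ≤ l) (hl1 : l ≤ 1) :
    p ^ (1 + l) / q ^ l + (1 - p) ^ (1 + l) / (1 - q) ^ l
      ≤ (p ^ 2 / q + (1 - p) ^ 2 / (1 - q)) ^ l := by
  have hq1' : 0 < 1 - q := by linarith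
  have hp1' : 0 ≤ 1 - p := by linarith
  rw [rpow_one_add_div_rpow hp0 hq0.le hl0, rpow_one_add_div_rpow hp1' hq1'.le hl0]
  have jensen := (concaveOn_rpow hl0 hl1).2 (div_nonneg hp0 hq0.le)
    (div_nonneg hp1' hq1'.le) hp0 hp1' (add_sub_cancel p 1)
  simp only [smul_eq_mul] at jensen
  refine jensen.trans_eq (congrArg (· ^ l) ?_)
  ring

lemma min_le_two_mul_mul_one_sub {q : ℝ} (hq0 : 0 ≤ q) (hq1 : q ≤ 1) :
    min q (1 - q) ≤ 2 * (q * (1 - q)) := by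
  have hmax : 1 / 2 ≤ max q (1 - q) := by
    rcases le_total q (1 - q) with h | h
    · rw [max_eq_right h]; linarith
    · rw [max_eq_left h]; linarith
  rw [← min_mul_max q (1 - q)]
  nlinarith [le_min hq0 (by linarith : 0 ≤ 1 - q)]

lemma chiSq_le_two_sq_div_min {p q : ℝ} (hq0 : 0 < q) (hq1 : q < 1) :
    (p - q) ^ 2 / (q * (1 - q)) ≤ 2 * (p - q) ^ 2 / min q (1 - q) := by
  have hq1' : 0 < 1 - q := by linarith
  rw [div_le_div_iff₀ (by positivity) (lt_min hq0 hq1')]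
  nlinarith [sq_nonneg (p - q), min_le_two_mul_mul_one_sub hq0.le hq1.le]

/-- Verdú–Sason bound: for Bernoulli parameters `p, q ∈ (0,1)`, `λ ∈ (0,1]`, and
`δ = |p - q|`, the Rényi divergence of order `1+λ` satisfies
`(1/λ) log(p^{1+λ}/q^λ + (1-p)^{1+λ}/(1-q)^λ) ≤ log(1 + 2δ²/min(q,1-q))`. -/
theorem stmt_8 (p q : ℝ) (hp0 : 0 < p) (hp1 : p < 1) (hq0 : 0 < q) (hq1 : q < 1)
    (l : ℝ) (hl0 : 0 < l) (hl1 : l ≤ 1) (δ : ℝ) (hδ : δ = |p - q|) :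
    (1 / l) * Real.log (p ^ (1 + l) / q ^ l + (1 - p) ^ (1 + l) / (1 - q) ^ l)
      ≤ Real.log (1 + 2 * δ ^ 2 / min q (1 - q)) := by
  have hq1' : 0 < 1 - q := by linarith
  have hχ : 0 < 1 + (p - q) ^ 2 / (q * (1 - q)) := by positivity
  have hsum : 0 < p ^ (1 + l) / q ^ l + (1 - p) ^ (1 + l) / (1 - q) ^ l := by
    have : 0 < 1 - p := by linarith
    positivity
  have hrenyi := bernoulli_renyi_sum_le hp0.le hp1.le hq0 hq1 hl0.le hl1
  rw [bernoulli_chiSq_add_one hq0 hq1] at hrenyi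
  calc (1 / l) * log (p ^ (1 + l) / q ^ l + (1 - p) ^ (1 + l) / (1 - q) ^ l)
      ≤ (1 / l) * log ((1 + (p - q) ^ 2 / (q * (1 - q))) ^ l) := by
        gcongr
    _ = log (1 + (p - q) ^ 2 / (q * (1 - q))) := by
        rw [log_rpow hχ, ← mul_assoc, one_div_mul_cancel hl0.ne', one_mul]
    _ ≤ log (1 + 2 * δ ^ 2 / min q (1 - q)) := by
        apply log_le_log hχ
        rw [hδ, sq_abs]
        linarith [chiSq_le_two_sq_div_min (p := p) hq0 hq1]
end

section
/- Let p, q ∈ (0,1) satisfy 1/2 - cβ ≤ q ≤ 1/2 + cβ and |p - q| ≤ 2cβ^{κ-1}, where c, β > 0 with 2cβ < 1 and κ ≥ 1. Then for any λ ∈ (0,1], p^{1+λ}/q^λ + (1-p)^{1+λ}/(1-q)^λ ≤ (1 + 8c²β^{2(κ-1)}/(1/2 - cβ))^λ ≤ exp(16c²β^{2(κ-1)}λ/(1 - 2cβ)). -/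
/-!
Writing `p ^ (1 + l) / q ^ l = p * (p / q) ^ l`, the left-hand side is a convex combination of
values of the concave map `x ↦ x ^ l`, so by Jensen it is at most `(1 + χ²) ^ l`, where
`χ² = (p - q)² / (q (1 - q))` is the χ²-divergence between the two Bernoulli laws. Since both
`q` and `1 - q` are at least `1/2 - cβ` and one of them is at least `1/2`, we get
`χ² ≤ 2 |p - q|² / (1/2 - cβ)`. The last bound is `1 + x ≤ exp x`.
-/

open Real

lemma bernoulli_chiSq_eq {p q : ℝ} (hq0 : 0 < q) (hq1 : q < 1) :
    p * (p / q) + (1 - p) * ((1 - p) / (1 - q)) = 1 + (p - q) ^ 2 / (q * (1 - q)) := by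
  have : 1 - q ≠ 0 := by linarith
  field_simp
  ring

lemma mul_rpow_div_eq_rpow_one_add_div {p q : ℝ} (hp : 0 < p) (hq : 0 ≤ q) (l : ℝ) :
    p * (p / q) ^ l = p ^ (1 + l) / q ^ l := by
  rw [div_rpow hp.le hq, rpow_add hp, rpow_one, mul_div_assoc]

lemma bernoulli_renyi_integrand_le {p q l : ℝ} (hp0 : 0 < p) (hp1 : p < 1) (hq0 : 0 < q)
    (hq1 : q < 1) (hl0 : 0 ≤ l) (hl1 : l ≤ 1) :
    p ^ (1 + l) / q ^ l + (1 - p) ^ (1 + l) / (1 - q) ^ l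
      ≤ (1 + (p - q) ^ 2 / (q * (1 - q))) ^ l := by
  have jensen := (concaveOn_rpow hl0 hl1).2 (x := p / q) (y := (1 - p) / (1 - q))
    (by simp only [Set.mem_Ici]; positivity) (by simp only [Set.mem_Ici]; bound)
    hp0.le (sub_nonneg.2 hp1.le) (add_sub_cancel p 1)
  simp only [smul_eq_mul] at jensen
  rwa [mul_rpow_div_eq_rpow_one_add_div hp0 hq0.le,
    mul_rpow_div_eq_rpow_one_add_div (sub_pos.2 hp1) (sub_pos.2 hq1).le,
    bernoulli_chiSq_eq hq0 hq1] at jensen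

lemma half_le_mul_one_sub {q δ : ℝ} (hδ : 0 ≤ δ) (hq : δ ≤ q) (hq' : δ ≤ 1 - q) :
    δ / 2 ≤ q * (1 - q) := by
  rcases le_total q (1 / 2) with h | h <;> nlinarith

lemma sq_div_mul_one_sub_le {p q ε δ : ℝ} (hδ : 0 < δ) (hq : δ ≤ q) (hq' : δ ≤ 1 - q)
    (hpq : |p - q| ≤ ε) :
    (p - q) ^ 2 / (q * (1 - q)) ≤ 2 * ε ^ 2 / δ := by
  have hnum : (p - q) ^ 2 ≤ ε ^ 2 := sq_le_sq' (abs_le.1 hpq).1 (abs_le.1 hpq).2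
  calc (p - q) ^ 2 / (q * (1 - q)) ≤ ε ^ 2 / (δ / 2) :=
        div_le_div₀ (by positivity) hnum (by positivity) (half_le_mul_one_sub hδ.le hq hq')
    _ = 2 * ε ^ 2 / δ := by field_simp

lemma one_add_rpow_le_exp_mul {x l : ℝ} (hx : -1 ≤ x) (hl : 0 ≤ l) :
    (1 + x) ^ l ≤ exp (x * l) := by
  rw [exp_mul]
  exact rpow_le_rpow (by linarith) (by linarith [add_one_le_exp x]) hl

theorem stmt_9_general (p q : ℝ) (hp0 : 0 < p) (hp1 : p < 1) (hq0 : 0 < q) (hq1 : q < 1)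
    (c β κ : ℝ) (hβ : 0 < β) (hcβ : 2 * c * β < 1)
    (hqlo : 1 / 2 - c * β ≤ q) (hqhi : q ≤ 1 / 2 + c * β)
    (hpq : |p - q| ≤ 2 * c * β ^ (κ - 1))
    (l : ℝ) (hl0 : 0 < l) (hl1 : l ≤ 1) :
    p ^ (1 + l) / q ^ l + (1 - p) ^ (1 + l) / (1 - q) ^ l
        ≤ (1 + 8 * c ^ 2 * β ^ (2 * (κ - 1)) / (1 / 2 - c * β)) ^ l ∧
      (1 + 8 * c ^ 2 * β ^ (2 * (κ - 1)) / (1 / 2 - c * β)) ^ l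
        ≤ Real.exp (16 * c ^ 2 * β ^ (2 * (κ - 1)) * l / (1 - 2 * c * β)) := by
  have hδ : 0 < 1 / 2 - c * β := by linarith
  have hsq : 2 * (2 * c * β ^ (κ - 1)) ^ 2 = 8 * c ^ 2 * β ^ (2 * (κ - 1)) := by
    rw [mul_comm 2 (κ - 1), rpow_mul hβ.le, rpow_two]
    ring
  have hχ :
      (p - q) ^ 2 / (q * (1 - q)) ≤ 8 * c ^ 2 * β ^ (2 * (κ - 1)) / (1 / 2 - c * β) := by
    rw [← hsq]
    exact sq_div_mul_one_sub_le hδ hqlo (by linarith) hpq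
  refine ⟨?_, ?_⟩
  · calc _ ≤ (1 + (p - q) ^ 2 / (q * (1 - q))) ^ l :=
          bernoulli_renyi_integrand_le hp0 hp1 hq0 hq1 hl0.le hl1
      _ ≤ _ := rpow_le_rpow (by positivity) (by linarith) hl0.le
  · have hχ0 : 0 ≤ (p - q) ^ 2 / (q * (1 - q)) := div_nonneg (sq_nonneg _) (by nlinarith)
    calc _ ≤ exp (8 * c ^ 2 * β ^ (2 * (κ - 1)) / (1 / 2 - c * β) * l) :=
          one_add_rpow_le_exp_mul (by linarith) hl0.le
      _ = _ := by
          have : 1 - 2 * c * β ≠ 0 := by linarith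
          congr 1
          field_simp
          ring

/-- Bound on the Rényi integrand for the active-learning hypercube class. -/
theorem stmt_9 (p q : ℝ) (hp0 : 0 < p) (hp1 : p < 1) (hq0 : 0 < q) (hq1 : q < 1)
    (c β κ : ℝ) (hc : 0 < c) (hβ : 0 < β) (hcβ : 2 * c * β < 1) (hκ : 1 ≤ κ)
    (hqlo : 1 / 2 - c * β ≤ q) (hqhi : q ≤ 1 / 2 + c * β)
    (hpq : |p - q| ≤ 2 * c * β ^ (κ - 1))
    (l : ℝ) (hl0 : 0 < l) (hl1 : l ≤ 1) :
    p ^ (1 + l) / q ^ l + (1 - p) ^ (1 + l) / (1 - q) ^ l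
        ≤ (1 + 8 * c ^ 2 * β ^ (2 * (κ - 1)) / (1 / 2 - c * β)) ^ l ∧
      (1 + 8 * c ^ 2 * β ^ (2 * (κ - 1)) / (1 / 2 - c * β)) ^ l
        ≤ Real.exp (16 * c ^ 2 * β ^ (2 * (κ - 1)) * l / (1 - 2 * c * β)) :=
  stmt_9_general p q hp0 hp1 hq0 hq1 c β κ hβ hcβ hqlo hqhi hpq l hl0 hl1
end

section
/- Let P and Q be probability measures on a measurable space with P ≪ Q and suppose dP/dQ ≤ t Q-almost surely for some t ≥ e. Then for any λ > 0, (λ + t^{1+λ} − (1+λ)t)/(t log t + 1 − t) ≤ t^λ/(log t − 1). -/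
/-! Writing `s = t ^ λ`, so that `t ^ (1 + λ) = t * s`, the right-hand side minus the left-hand side
is exactly `s + ((1 + λ) t - λ) (log t - 1)`, and both terms are nonnegative once `t ≥ e` and `λ > 0`. -/

lemma fano_scalar_gap_eq (s t L l : ℝ) :
    s * (t * L + 1 - t) - (l + t * s - (1 + l) * t) * (L - 1) = s + ((1 + l) * t - l) * (L - 1) := by
  ring

/-- Scalar inequality used when recovering Fano's inequality: for `t ≥ e` and `λ > 0`,
`(λ + t^{1+λ} − (1+λ)t)/(t log t + 1 − t) ≤ t^λ/(log t − 1)`, stated in the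
cross-multiplied form valid also at `t = e` (both denominators are nonnegative,
with `t log t + 1 − t > 0`). -/
theorem stmt_16 (t l : ℝ) (ht : Real.exp 1 ≤ t) (hl : 0 < l) :
    (l + t ^ (1 + l) - (1 + l) * t) * (Real.log t - 1)
      ≤ t ^ l * (t * Real.log t + 1 - t) := by
  have ht0 : 0 < t := (Real.exp_pos 1).trans_le ht
  have hlog : 1 ≤ Real.log t := by rwa [Real.le_log_iff_exp_le ht0]
  have hcoef : 0 ≤ (1 + l) * t - l := by nlinarith [Real.add_one_le_exp 1]
  have hgap := fano_scalar_gap_eq (t ^ l) t (Real.log t) l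
  rw [Real.rpow_add ht0, Real.rpow_one]
  linarith [Real.rpow_pos_of_pos ht0 l, mul_nonneg hcoef (sub_nonneg.2 hlog)]
end
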